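/- Define q(x) = erf(x/2)/x - e^{-x²/4}/√π for x > 0. Then q extends to an even analytic function on ℝ with q(0) = 0, q(x) → 0 as x → ∞, q(x) > 0 for x > 0, and q is bounded; hence q attains a positive maximum q_max on (0,∞). Consequently, with A(r) = 1 - 2GMμ·q(μr), if M < 1/(2Gμ·q_max) then A(r) > 0 for all r > 0. -/

import Mathlib

/-
`erf` is odd and real-analytic, being the real trace of a primitive of the entire function
`exp (-z²)`. Hence `erf (x/2) / x`, completed at `0` by the derivative `1/√π` of `erf (x/2)`
there (this is `dslope`), is even and analytic, and the extension of `q` vanishes at `0`.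
Positivity of `q` on `(0, ∞)` is `∫₀^{x/2} e^{-t²} dt > (x/2) e^{-x²/4}`, as the integrand
decreases; the half-line Gaussian integral gives `erf ≤ 1`, so `0 < q x ≤ 1/x` and `q → 0`.
Being even, continuous, somewhere positive and `0` at both infinities, the extension attains a
positive global maximum, at a point that may be taken positive.
-/

/-- The error function `erf(x) = (2/√π)∫₀^x e^{-t²} dt`. -/
noncomputable def erf (x : ℝ) : ℝ :=
  2 / Real.sqrt Real.pi * ∫ t in (0:ℝ)..x, Real.exp (-(t ^ 2))

open Filter Topology intervalIntegral

theorem analyticAt_intervalIntegral_re {f : ℂ → ℂ} (hf : Differentiable ℂ f) (a x : ℝ) :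
    AnalyticAt ℝ (fun y : ℝ => ∫ t in a..y, (f t).re) x := by
  obtain ⟨F, hF⟩ := hf.isExactOn_univ
  have hFd : Differentiable ℂ F := fun z => (hF z trivial).differentiableAt
  have hcont : Continuous fun t : ℝ => (f t).re :=
    Complex.continuous_re.comp (hf.continuous.comp Complex.continuous_ofReal)
  have hprim : (fun y : ℝ => ∫ t in a..y, (f t).re) = fun y : ℝ => (F y).re - (F a).re :=
    funext fun y => integral_eq_sub_of_hasDerivAt
      (fun s _ => (hF s trivial).real_of_complex) (hcont.intervalIntegrable a y)
  rw [hprim]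
  refine AnalyticAt.sub ?_ analyticAt_const
  exact Complex.reCLM.analyticAt _ |>.comp <|
    (hFd.analyticAt _).restrictScalars.comp (Complex.ofRealCLM.analyticAt x)

theorem exp_neg_sq_eq_re (t : ℝ) :
    Real.exp (-(t ^ 2)) = (Complex.exp (-((t : ℂ) ^ 2))).re := by
  rw [← Complex.ofReal_pow, ← Complex.ofReal_neg, Complex.exp_ofReal_re]

theorem analyticAt_erf (x : ℝ) : AnalyticAt ℝ erf x := by
  have h : AnalyticAt ℝ (fun y : ℝ => ∫ t in (0:ℝ)..y, Real.exp (-(t ^ 2))) x := by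
    simp_rw [exp_neg_sq_eq_re]
    exact analyticAt_intervalIntegral_re (f := fun z => Complex.exp (-(z ^ 2))) (by fun_prop) 0 x
  exact analyticAt_const.mul h

theorem erf_zero : erf 0 = 0 := by simp [erf]

theorem erf_neg (x : ℝ) : erf (-x) = -erf x := by
  simp only [erf, ← mul_neg]
  congr 1
  have h := integral_comp_neg (a := 0) (b := x) fun t => Real.exp (-(t ^ 2))
  simp only [neg_sq, neg_zero] at h
  rw [h, integral_symm]

theorem hasDerivAt_erf (x : ℝ) :
    HasDerivAt erf (2 / Real.sqrt Real.pi * Real.exp (-(x ^ 2))) x := by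
  have hc : Continuous fun t : ℝ => Real.exp (-(t ^ 2)) := by fun_prop
  exact (integral_hasDerivAt_right (hc.intervalIntegrable 0 x)
    (hc.stronglyMeasurableAtFilter _ _) hc.continuousAt).const_mul _

theorem erf_nonneg {x : ℝ} (hx : 0 ≤ x) : 0 ≤ erf x :=
  mul_nonneg (by positivity) (integral_nonneg hx fun t _ => (Real.exp_pos _).le)

theorem erf_le_one (x : ℝ) : erf x ≤ 1 := by
  rcases le_or_gt 0 x with hx | hx
  · have hgauss : ∫ t in Set.Ioi (0:ℝ), Real.exp (-(t ^ 2)) = Real.sqrt Real.pi / 2 := by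
      simpa using integral_gaussian_Ioi 1
    have hle : ∫ t in (0:ℝ)..x, Real.exp (-(t ^ 2)) ≤ Real.sqrt Real.pi / 2 := by
      rw [integral_of_le hx, ← hgauss]
      refine MeasureTheory.setIntegral_mono_set ?_ ?_ ?_
      · simpa using (integrable_exp_neg_mul_sq one_pos).integrableOn
      · exact Eventually.of_forall fun t => (Real.exp_pos _).le
      · exact Set.Ioc_subset_Ioi_self.eventuallyLE
    calc erf x ≤ 2 / Real.sqrt Real.pi * (Real.sqrt Real.pi / 2) := by
          unfold erf; gcongr
      _ = 1 := by field_simp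
  · have := erf_nonneg (neg_nonneg.2 hx.le)
    rw [erf_neg] at this
    linarith

theorem mul_exp_neg_sq_lt_erf {y : ℝ} (hy : 0 < y) :
    2 / Real.sqrt Real.pi * (y * Real.exp (-(y ^ 2))) < erf y := by
  have h := integral_lt_integral_of_continuousOn_of_le_of_exists_lt
    (f := fun _ => Real.exp (-(y ^ 2))) (g := fun t : ℝ => Real.exp (-(t ^ 2))) hy
    continuousOn_const (by fun_prop)
    (fun t ht => Real.exp_le_exp.2 (by nlinarith [ht.1, ht.2]))
    ⟨0, ⟨le_rfl, hy.le⟩, Real.exp_lt_exp.2 (by nlinarith)⟩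
  rw [integral_const, smul_eq_mul, sub_zero] at h
  exact mul_lt_mul_of_pos_left h (by positivity)

section dslope

variable {𝕜 E : Type*} [NontriviallyNormedField 𝕜] [NormedAddCommGroup E] [NormedSpace 𝕜 E]

theorem analyticAt_dslope {f : 𝕜 → E} {a x : 𝕜} (ha : AnalyticAt 𝕜 f a)
    (hx : AnalyticAt 𝕜 f x) :
    AnalyticAt 𝕜 (dslope f a) x := by
  rcases eq_or_ne x a with rfl | hxa
  · obtain ⟨p, hp⟩ := ha
    exact hp.has_fpower_series_dslope_fslope.analyticAt
  · have hquot : AnalyticAt 𝕜 (fun y => (y - a)⁻¹ • (f y - f a)) x :=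
      ((analyticAt_id.sub analyticAt_const).inv (sub_ne_zero.2 hxa)).smul
        (hx.sub analyticAt_const)
    refine hquot.congr ?_
    filter_upwards [eventually_ne_nhds hxa] with y hy
    rw [dslope_of_ne _ hy, slope_def_module]

theorem dslope_zero_neg_of_odd {f : 𝕜 → E} (hf : ∀ x, f (-x) = -f x) (x : 𝕜) :
    dslope f 0 (-x) = dslope f 0 x := by
  rcases eq_or_ne x 0 with rfl | hx
  · rw [neg_zero]
  have h0 : -f 0 = f 0 := by simpa using (hf 0).symm
  calc dslope f 0 (-x) = -(x⁻¹ • (-f x - f 0)) := by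
        rw [dslope_of_ne _ (neg_ne_zero.2 hx), slope_def_module, hf, sub_zero, inv_neg, neg_smul]
    _ = x⁻¹ • (f x - f 0) := by
        rw [← smul_neg]
        conv_rhs => rw [← h0]
        congr 1
        abel
    _ = dslope f 0 x := by rw [dslope_of_ne _ hx, slope_def_module, sub_zero]

end dslope

noncomputable def qExt (x : ℝ) : ℝ :=
  dslope (fun y => erf (y / 2)) 0 x - Real.exp (-(x ^ 2 / 4)) / Real.sqrt Real.pi

theorem analyticAt_qExt (x : ℝ) : AnalyticAt ℝ qExt x := by
  have herf : ∀ y, AnalyticAt ℝ (fun y => erf (y / 2)) y := fun y =>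
    (analyticAt_erf (y / 2)).comp (f := fun y : ℝ => y / 2) (by fun_prop)
  exact (analyticAt_dslope (herf 0) (herf x)).sub (by fun_prop)

theorem qExt_neg (x : ℝ) : qExt (-x) = qExt x := by
  have hodd : ∀ y : ℝ, erf (-y / 2) = -erf (y / 2) := fun y => by rw [neg_div, erf_neg]
  rw [qExt, qExt, dslope_zero_neg_of_odd hodd, neg_sq]

theorem qExt_zero : qExt 0 = 0 := by
  have hderiv : HasDerivAt (fun y => erf (y / 2))
      (2 / Real.sqrt Real.pi * Real.exp (-((0 / 2) ^ 2)) * (1 / 2)) 0 :=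
    (hasDerivAt_erf (0 / 2)).comp (h := fun y : ℝ => y / 2) 0
      (by simpa using (hasDerivAt_id (0 : ℝ)).div_const 2)
  rw [qExt, dslope_same, hderiv.deriv]
  simp only [zero_div, ne_eq, two_ne_zero, not_false_eq_true, zero_pow, neg_zero, Real.exp_zero]
  ring

theorem qExt_of_ne {x : ℝ} (hx : x ≠ 0) :
    qExt x = erf (x / 2) / x - Real.exp (-(x ^ 2 / 4)) / Real.sqrt Real.pi := by
  rw [qExt, dslope_of_ne _ hx, slope_def_field, zero_div, erf_zero, sub_zero, sub_zero]

theorem qExt_pos {x : ℝ} (hx : 0 < x) : 0 < qExt x := by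
  have h := mul_exp_neg_sq_lt_erf (half_pos hx)
  rw [qExt_of_ne hx.ne', sub_pos, lt_div_iff₀ hx]
  calc Real.exp (-(x ^ 2 / 4)) / Real.sqrt Real.pi * x
      = 2 / Real.sqrt Real.pi * (x / 2 * Real.exp (-(x / 2) ^ 2)) := by ring_nf
    _ < erf (x / 2) := h

theorem qExt_le_inv {x : ℝ} (hx : 0 < x) : qExt x ≤ x⁻¹ := by
  rw [qExt_of_ne hx.ne', ← one_div]
  have hexp : 0 ≤ Real.exp (-(x ^ 2 / 4)) / Real.sqrt Real.pi := by positivity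
  have herf : erf (x / 2) / x ≤ 1 / x := div_le_div_of_nonneg_right (erf_le_one _) hx.le
  linarith

theorem tendsto_qExt_atTop : Tendsto qExt atTop (𝓝 0) :=
  tendsto_of_tendsto_of_tendsto_of_le_of_le' tendsto_const_nhds tendsto_inv_atTop_zero
    ((eventually_gt_atTop 0).mono fun _ hx => (qExt_pos hx).le)
    ((eventually_gt_atTop 0).mono fun _ hx => qExt_le_inv hx)

theorem tendsto_qExt_cocompact : Tendsto qExt (cocompact ℝ) (𝓝 0) := by
  rw [cocompact_eq_atBot_atTop, tendsto_sup]
  refine ⟨?_, tendsto_qExt_atTop⟩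
  simpa [Function.comp_def, qExt_neg] using tendsto_qExt_atTop.comp tendsto_neg_atBot_atTop

theorem exists_pos_forall_qExt_le : ∃ x₀ > 0, ∀ y, qExt y ≤ qExt x₀ := by
  have hcont : Continuous qExt :=
    continuous_iff_continuousAt.2 fun x => (analyticAt_qExt x).continuousAt
  have hq1 := qExt_pos one_pos
  obtain ⟨x₀, hmax⟩ :=
    hcont.exists_forall_ge' 1 (tendsto_qExt_cocompact.eventually (eventually_le_nhds hq1))
  have hx₀ : x₀ ≠ 0 := by
    rintro rfl
    linarith [hmax 1, qExt_zero]
  have habs : qExt |x₀| = qExt x₀ := by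
    rcases abs_choice x₀ with h | h <;> rw [h]
    exact qExt_neg x₀
  exact ⟨|x₀|, abs_pos.2 hx₀, habs ▸ hmax⟩

theorem one_sub_mul_pos_of_lt_one_div {G M μ Q Qmax : ℝ} (hμ : 0 < μ) (hQ : Q ≤ Qmax)
    (hQmax : 0 < Qmax) (hM : 0 < M) (hMlt : M < 1 / (2 * G * μ * Qmax)) :
    0 < 1 - 2 * G * M * μ * Q := by
  have hd : 0 < 2 * G * μ * Qmax := by
    by_contra h
    linarith [one_div_nonpos.2 (not_lt.1 h)]
  have hG : 0 < G := by
    by_contra h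
    nlinarith [mul_pos hμ hQmax]
  rw [lt_div_iff₀ hd] at hMlt
  nlinarith [mul_le_mul_of_nonneg_left hQ (by positivity : 0 ≤ 2 * G * M * μ)]

theorem stmt16_general (G μ : ℝ) (hμ : 0 < μ)
    (q : ℝ → ℝ)
    (hq : ∀ x, 0 < x → q x = erf (x / 2) / x - Real.exp (-(x ^ 2 / 4)) / Real.sqrt Real.pi) :
    (∃ g : ℝ → ℝ, (∀ x, AnalyticAt ℝ g x) ∧ (∀ x, g (-x) = g x) ∧
      (∀ x, 0 < x → g x = q x) ∧ g 0 = 0) ∧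
    Filter.Tendsto q Filter.atTop (nhds 0) ∧
    (∀ x, 0 < x → 0 < q x) ∧
    ∃ qmax > (0:ℝ), (∀ x > (0:ℝ), q x ≤ qmax) ∧ (∃ x > (0:ℝ), q x = qmax) ∧
      ∀ M > (0:ℝ), M < 1 / (2 * G * μ * qmax) →
        ∀ r > (0:ℝ), 0 < 1 - 2 * G * M * μ * q (μ * r) := by
  have hqExt : ∀ x, 0 < x → qExt x = q x := fun x hx => by rw [hq x hx, qExt_of_ne hx.ne']
  have hqpos : ∀ x, 0 < x → 0 < q x := fun x hx => hqExt x hx ▸ qExt_pos hx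
  obtain ⟨x₀, hx₀, hmax⟩ := exists_pos_forall_qExt_le
  have hle : ∀ x > (0:ℝ), q x ≤ qExt x₀ := fun x hx => hqExt x hx ▸ hmax x
  refine ⟨⟨qExt, analyticAt_qExt, qExt_neg, hqExt, qExt_zero⟩,
    tendsto_qExt_atTop.congr' ((eventually_gt_atTop 0).mono hqExt), hqpos,
    qExt x₀, qExt_pos hx₀, hle, ⟨x₀, hx₀, (hqExt x₀ hx₀).symm⟩, ?_⟩
  intro M hM hMlt r hr
  have hμr := mul_pos hμ hr
  exact one_sub_mul_pos_of_lt_one_div hμ (hle _ hμr) (qExt_pos hx₀) hM hMlt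

/-- The function `q(x) = erf(x/2)/x - e^{-x²/4}/√π` extends to an even analytic function
vanishing at `0` and at infinity, is positive for `x > 0`, and attains a positive
maximum `q_max` on `(0,∞)`. Consequently, for `A(r) = 1 - 2GMμ·q(μr)`, if
`M < 1/(2Gμ·q_max)` then `A(r) > 0` for all `r > 0` (mass gap for horizon formation). -/
theorem stmt16 (G μ : ℝ) (hG : 0 < G) (hμ : 0 < μ)
    (q : ℝ → ℝ)
    (hq : ∀ x, 0 < x → q x = erf (x / 2) / x - Real.exp (-(x ^ 2 / 4)) / Real.sqrt Real.pi) :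
    (∃ g : ℝ → ℝ, (∀ x, AnalyticAt ℝ g x) ∧ (∀ x, g (-x) = g x) ∧
      (∀ x, 0 < x → g x = q x) ∧ g 0 = 0) ∧
    Filter.Tendsto q Filter.atTop (nhds 0) ∧
    (∀ x, 0 < x → 0 < q x) ∧
    ∃ qmax > (0:ℝ), (∀ x > (0:ℝ), q x ≤ qmax) ∧ (∃ x > (0:ℝ), q x = qmax) ∧
      ∀ M > (0:ℝ), M < 1 / (2 * G * μ * qmax) →
        ∀ r > (0:ℝ), 0 < 1 - 2 * G * M * μ * q (μ * r) :=
  stmt16_general G μ hμ q hq
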